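/- For every probability measure Q on Ω that is equivalent to P, such that W is Q-integrable and D_KL(Q‖P) < ∞, the following identity holds: E_Q[W] + β⁻¹ D_KL(Q‖P) = ΔF + β⁻¹ D_KL(Q‖P*). (Paper eq. (2.54).) -/

import Mathlib

open MeasureTheory

/-- Kullback-Leibler divergence `D_KL(Q ‖ P) = ∫ log (dQ/dP) dQ`. -/
noncomputable def klDiv' {Ω : Type*} [MeasurableSpace Ω] (Q P : Measure Ω) : ℝ :=
  ∫ x, Real.log ((Q.rnDeriv P x).toReal) ∂Q

/-- Free energy difference `ΔF = -β⁻¹ ln ∫ e^{-βW} dP`. -/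
noncomputable def deltaF {Ω : Type*} [MeasurableSpace Ω] (β : ℝ) (W : Ω → ℝ)
    (P : Measure Ω) : ℝ :=
  -β⁻¹ * Real.log (∫ x, Real.exp (-β * W x) ∂P)

/-- The optimal (zero-variance) tilted measure `P*` with `dP*/dP = e^{-β(W-ΔF)}`. -/
noncomputable def Pstar {Ω : Type*} [MeasurableSpace Ω] (β : ℝ) (W : Ω → ℝ)
    (P : Measure Ω) : Measure Ω :=
  P.withDensity (fun x => ENNReal.ofReal (Real.exp (-β * (W x - deltaF β W P))))

/-! The Gibbs measure `P*` is Mathlib's exponential tilt `P.tilted (-β W)`, so the identity is the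
change of reference measure `D(Q‖P.tilted f) = D(Q‖P) - E_Q[f] + log E_P[e^f]`
(`integral_llr_tilted_right`) with `f = -β W`, using `log E_P[e^{-βW}] = -β ΔF`. -/

section FreeEnergy

variable {Ω : Type*} [MeasurableSpace Ω] {P : Measure Ω} {β : ℝ} {W : Ω → ℝ}

lemma klDiv'_eq_integral_llr (Q : Measure Ω) : klDiv' Q P = ∫ x, llr Q P x ∂Q := rfl

lemma log_integral_exp_eq_neg_mul_deltaF (hβ : β ≠ 0) :
    Real.log (∫ x, Real.exp (-β * W x) ∂P) = -β * deltaF β W P := by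
  rw [deltaF]
  field_simp

lemma Pstar_eq_tilted [NeZero P] (hβ : β ≠ 0)
    (hexp : Integrable (fun x => Real.exp (-β * W x)) P) :
    Pstar β W P = P.tilted (fun x => -β * W x) := by
  have hZ := integral_exp_pos hexp
  rw [Pstar, Measure.tilted]
  congr with x
  rw [mul_sub, Real.exp_sub, ← log_integral_exp_eq_neg_mul_deltaF hβ, Real.exp_log hZ]

end FreeEnergy

theorem work_entropy_identity_general
    {Ω : Type*} [MeasurableSpace Ω]
    (P : Measure Ω) [IsProbabilityMeasure P]
    (β : ℝ) (hβ : 0 < β)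
    (W : Ω → ℝ)
    (hexp : Integrable (fun x => Real.exp (-β * W x)) P)
    (Q : Measure Ω) [IsProbabilityMeasure Q]
    (hQP : Q ≪ P)
    (hWQ : Integrable W Q)
    (hKLfin : Integrable (fun x => Real.log ((Q.rnDeriv P x).toReal)) Q) :
    ∫ x, W x ∂Q + β⁻¹ * klDiv' Q P
      = deltaF β W P + β⁻¹ * klDiv' Q (Pstar β W P) := by
  have hKL : klDiv' Q (Pstar β W P)
      = klDiv' Q P + β * ∫ x, W x ∂Q - β * deltaF β W P := by
    rw [Pstar_eq_tilted hβ.ne' hexp, klDiv'_eq_integral_llr, klDiv'_eq_integral_llr,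
      integral_llr_tilted_right hQP (hWQ.const_mul (-β)) hexp hKLfin,
      log_integral_exp_eq_neg_mul_deltaF hβ.ne', integral_const_mul]
    ring
  rw [hKL]
  field_simp
  ring

/-- Paper eq. (2.54): for every probability measure `Q` equivalent to `P` with `W`
`Q`-integrable and finite relative entropy,
`E_Q[W] + β⁻¹ D_KL(Q‖P) = ΔF + β⁻¹ D_KL(Q‖P*)`. -/
theorem work_entropy_identity
    {Ω : Type*} [MeasurableSpace Ω]
    (P : Measure Ω) [IsProbabilityMeasure P]
    (β : ℝ) (hβ : 0 < β)
    (W : Ω → ℝ) (hW : Measurable W)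
    (hexp : Integrable (fun x => Real.exp (-β * W x)) P)
    (hWexp : Integrable (fun x => W x * Real.exp (-β * W x)) P)
    (Q : Measure Ω) [IsProbabilityMeasure Q]
    (hQP : Q ≪ P) (hPQ : P ≪ Q)
    (hWQ : Integrable W Q)
    (hKLfin : Integrable (fun x => Real.log ((Q.rnDeriv P x).toReal)) Q) :
    ∫ x, W x ∂Q + β⁻¹ * klDiv' Q P
      = deltaF β W P + β⁻¹ * klDiv' Q (Pstar β W P) :=
  work_entropy_identity_general P β hβ W hexp Q hQP hWQ hKLfin
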